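/- In a binary tree-based phylogenetic network, any cherry cover assigns exactly one of the two incoming arcs of each reticulation to be the middle arc of a reticulated cherry shape. -/

import Mathlib

namespace PhyloNet

/-- A binary phylogenetic network, encoded on vertex set `verts ⊆ ℕ`. -/
structure Network where
  verts : Finset ℕ
  arc : ℕ → ℕ → Bool
  root : ℕ
  root_mem : root ∈ verts
  arc_mem : ∀ u v : ℕ, arc u v = true → u ∈ verts ∧ v ∈ verts
  acyclic : ∀ v : ℕ, ¬ Relation.TransGen (fun a b : ℕ => arc a b = true) v v
  root_indeg : (verts.filter fun u => arc u root = true).card = 0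
  root_outdeg : (verts.filter fun w => arc root w = true).card = 1
  nonroot_deg : ∀ v ∈ verts, v ≠ root →
    ((verts.filter fun u => arc u v = true).card = 1 ∧
      (verts.filter fun w => arc v w = true).card = 2) ∨
    ((verts.filter fun u => arc u v = true).card = 2 ∧
      (verts.filter fun w => arc v w = true).card = 1) ∨
    ((verts.filter fun u => arc u v = true).card = 1 ∧
      (verts.filter fun w => arc v w = true).card = 0)

def inDeg (N : Network) (v : ℕ) : ℕ := (N.verts.filter fun u => N.arc u v = true).card

def outDeg (N : Network) (v : ℕ) : ℕ := (N.verts.filter fun w => N.arc v w = true).card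

def IsLeaf (N : Network) (v : ℕ) : Prop := v ∈ N.verts ∧ inDeg N v = 1 ∧ outDeg N v = 0

def IsRet (N : Network) (v : ℕ) : Prop := v ∈ N.verts ∧ inDeg N v = 2

def IsTreeVert (N : Network) (v : ℕ) : Prop := v ∈ N.verts ∧ inDeg N v = 1 ∧ outDeg N v = 2

def IsInternal (N : Network) (v : ℕ) : Prop := v ∈ N.verts ∧ v ≠ N.root ∧ ¬ IsLeaf N v

def IsTree (N : Network) : Prop := ∀ v : ℕ, ¬ IsRet N v

noncomputable def retCount (N : Network) : ℕ := {v : ℕ | IsRet N v}.ncard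

/-- Tree-child: every non-leaf vertex has a child that is a tree vertex or a leaf. -/
def IsTreeChild (N : Network) : Prop :=
  ∀ v ∈ N.verts, ¬ IsLeaf N v → ∃ w : ℕ, N.arc v w = true ∧ (IsTreeVert N w ∨ IsLeaf N w)

/-- An omnian: an internal vertex all of whose children are reticulations. -/
def IsOmnian (N : Network) (v : ℕ) : Prop :=
  IsInternal N v ∧ ∀ w : ℕ, N.arc v w = true → IsRet N w

noncomputable def omnianCount (N : Network) : ℕ := {v : ℕ | IsOmnian N v}.ncard

/-- `N'` is obtained from `N` by adding a leaf to the arc `uv`: the arc is subdivided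
by a fresh vertex `w`, and a fresh leaf `x` is attached to `w`. -/
def IsLeafAdditionOn (N N' : Network) (u v : ℕ) : Prop :=
  N.arc u v = true ∧ ∃ w x : ℕ, w ∉ N.verts ∧ x ∉ N.verts ∧ w ≠ x ∧
    N'.verts = insert w (insert x N.verts) ∧ N'.root = N.root ∧
    ∀ a b : ℕ, (N'.arc a b = true ↔
      ((N.arc a b = true ∧ ¬ (a = u ∧ b = v)) ∨ (a = u ∧ b = w) ∨
        (a = w ∧ b = v) ∨ (a = w ∧ b = x)))

def IsLeafAddition (N N' : Network) : Prop := ∃ u v : ℕ, IsLeafAdditionOn N N' u v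

/-- `N'` is obtained from `N` by adding a leaf to a reticulation arc. -/
def IsRetArcLeafAddition (N N' : Network) : Prop :=
  ∃ u v : ℕ, IsRet N v ∧ IsLeafAdditionOn N N' u v

/-- `P` holds after exactly `k` steps of relation `step` starting from `N`. -/
def ReachableBy (step : Network → Network → Prop) (N : Network) (k : ℕ)
    (P : Network → Prop) : Prop :=
  ∃ M : ℕ → Network, M 0 = N ∧ (∀ i : ℕ, i < k → step (M i) (M (i + 1))) ∧ P (M k)

/-- The minimum number of leaf additions needed to bring `N` into the class `P`. -/
noncomputable def leafAddDist (P : Network → Prop) (N : Network) : ℕ :=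
  sInf {k : ℕ | ReachableBy IsLeafAddition N k P}

noncomputable def LTC (N : Network) : ℕ := leafAddDist IsTreeChild N

/-- Reduction of a cherry (x,y): delete the leaf x and suppress its parent p
(whose own parent is q, gaining the arc q → y). -/
def ReducesCherry (N N' : Network) (x y : ℕ) : Prop :=
  ∃ p q : ℕ, IsLeaf N x ∧ IsLeaf N y ∧ x ≠ y ∧
    N.arc p x = true ∧ N.arc p y = true ∧ N.arc q p = true ∧
    N'.verts = (N.verts.erase x).erase p ∧ N'.root = N.root ∧
    ∀ a b : ℕ, (N'.arc a b = true ↔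
      (N.arc a b = true ∧ a ≠ p ∧ b ≠ p ∧ b ≠ x) ∨ (a = q ∧ b = y))

/-- Reduction of a reticulated cherry (x,y): delete the arc from the parent p_y of y
to the reticulation parent p_x of x, and clean up (suppressing p_x and p_y). -/
def ReducesRetCherry (N N' : Network) (x y : ℕ) : Prop :=
  ∃ px py z q : ℕ, IsLeaf N x ∧ IsLeaf N y ∧ IsRet N px ∧
    N.arc px x = true ∧ N.arc py px = true ∧ N.arc py y = true ∧
    N.arc z px = true ∧ z ≠ py ∧ N.arc q py = true ∧
    N'.verts = (N.verts.erase px).erase py ∧ N'.root = N.root ∧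
    ∀ a b : ℕ, (N'.arc a b = true ↔
      (N.arc a b = true ∧ a ≠ px ∧ a ≠ py ∧ b ≠ px ∧ b ≠ py) ∨
        (a = z ∧ b = x) ∨ (a = q ∧ b = y))

def CherryStep (N N' : Network) : Prop :=
  ∃ x y : ℕ, ReducesCherry N N' x y ∨ ReducesRetCherry N N' x y

/-- A network consisting of the root and a single leaf. -/
def IsSingleLeaf (N : Network) : Prop := ∃ x : ℕ, x ≠ N.root ∧ N.verts = {N.root, x}

/-- Orchard: reducible to a single leaf by cherry and reticulated cherry reductions. -/
def IsOrchard (N : Network) : Prop :=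
  ∃ N' : Network, Relation.ReflTransGen CherryStep N N' ∧ IsSingleLeaf N'

noncomputable def LOR (N : Network) : ℕ := leafAddDist IsOrchard N

/-- Tree-based: there is a spanning tree (a choice of one incoming arc for each
non-root vertex) all of whose leaves are leaves of `N`. -/
def IsTreeBased (N : Network) : Prop :=
  ∃ T : ℕ → ℕ → Bool, (∀ u v : ℕ, T u v = true → N.arc u v = true) ∧
    (∀ v ∈ N.verts, v ≠ N.root → (N.verts.filter fun u => T u v = true).card = 1) ∧
    (∀ v ∈ N.verts, ¬ IsLeaf N v → ∃ w : ℕ, T v w = true)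

noncomputable def LTB (N : Network) : ℕ := leafAddDist IsTreeBased N

/-- A zig-zag trail: a nonempty duplicate-free sequence of arcs in which
consecutive arcs share a tail or share a head. -/
def IsZigZag (N : Network) (s : List (ℕ × ℕ)) : Prop :=
  s ≠ [] ∧ s.Nodup ∧ (∀ a ∈ s, N.arc a.1 a.2 = true) ∧
    List.Chain' (fun a b : ℕ × ℕ => a.1 = b.1 ∨ a.2 = b.2) s

def IsMaximalZigZag (N : Network) (s : List (ℕ × ℕ)) : Prop :=
  IsZigZag N s ∧ ∀ t : List (ℕ × ℕ), IsZigZag N t → s.Sublist t → t.length = s.length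

/-- A W-fence: a maximal zig-zag trail of even length whose two end-arc tails
are both reticulations. -/
def IsWFence (N : Network) (s : List (ℕ × ℕ)) : Prop :=
  IsMaximalZigZag N s ∧ s.length % 2 = 0 ∧ 2 ≤ s.length ∧
    IsRet N (s.headD (0, 0)).1 ∧ IsRet N (s.getLastD (0, 0)).1

/-- An N-fence: a maximal zig-zag trail of odd length exactly one of whose
end-arc tails is a reticulation. -/
def IsNFence (N : Network) (s : List (ℕ × ℕ)) : Prop :=
  IsMaximalZigZag N s ∧ s.length % 2 = 1 ∧
    Xor' (IsRet N (s.headD (0, 0)).1) (IsRet N (s.getLastD (0, 0)).1)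

/-- A zig-zag decomposition: a set of maximal zig-zag trails partitioning the
non-root arcs of the network. -/
def IsZigZagDecomposition (N : Network) (D : Set (List (ℕ × ℕ))) : Prop :=
  (∀ s ∈ D, IsMaximalZigZag N s) ∧
  (∀ s ∈ D, ∀ p ∈ s, p.1 ≠ N.root) ∧
  (∀ a b : ℕ, N.arc a b = true → a ≠ N.root → ∃! s : List (ℕ × ℕ), s ∈ D ∧ (a, b) ∈ s)

/-- A cherry shape: two arcs with a common tail. -/
def IsCherryShape (N : Network) (s : Set (ℕ × ℕ)) : Prop :=
  ∃ p x y : ℕ, x ≠ y ∧ N.arc p x = true ∧ N.arc p y = true ∧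
    s = {(p, x), (p, y)}

/-- A reticulated cherry shape: arcs p_x x, p_y p_x, p_y y where p_x is a reticulation;
its middle arc is p_y p_x. -/
def IsRetCherryShape (N : Network) (s : Set (ℕ × ℕ)) : Prop :=
  ∃ x y px py : ℕ, IsRet N px ∧ N.arc px x = true ∧ N.arc py px = true ∧
    N.arc py y = true ∧ y ≠ px ∧ s = {(px, x), (py, px), (py, y)}

/-- `s` is a reticulated cherry shape with middle arc `(u, r)`. -/
def IsMiddleArcOf (N : Network) (s : Set (ℕ × ℕ)) (u r : ℕ) : Prop :=
  ∃ x y : ℕ, IsRet N r ∧ N.arc r x = true ∧ N.arc u r = true ∧ N.arc u y = true ∧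
    y ≠ r ∧ s = {(r, x), (u, r), (u, y)}

/-- A cherry cover: cherry shapes and reticulated cherry shapes covering every
non-root arc exactly once. -/
def IsCherryCover (N : Network) (P : Set (Set (ℕ × ℕ))) : Prop :=
  (∀ s ∈ P, IsCherryShape N s ∨ IsRetCherryShape N s) ∧
  (∀ a b : ℕ, N.arc a b = true → a ≠ N.root →
    ∃! s : Set (ℕ × ℕ), s ∈ P ∧ (a, b) ∈ s)

/-- The internal vertices of a shape are the tails of its arcs. -/
def shapeInternals (s : Set (ℕ × ℕ)) : Set ℕ := {p : ℕ | ∃ x : ℕ, (p, x) ∈ s}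

/-- The endpoints of a shape: heads of its arcs that are not tails of its arcs. -/
def shapeEndpoints (s : Set (ℕ × ℕ)) : Set ℕ :=
  {x : ℕ | (∃ p : ℕ, (p, x) ∈ s) ∧ ∀ y : ℕ, (x, y) ∉ s}

/-- In the auxiliary graph, shape `B` is directly above shape `C` if an internal
vertex of `C` is an endpoint of `B`. -/
def DirectlyAbove (B C : Set (ℕ × ℕ)) : Prop :=
  ∃ v : ℕ, v ∈ shapeEndpoints B ∧ v ∈ shapeInternals C

/-- The auxiliary graph of the cherry cover `P` contains a directed cycle. -/
def HasCyclicAux (P : Set (Set (ℕ × ℕ))) : Prop :=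
  ∃ s ∈ P, Relation.TransGen
    (fun B C : Set (ℕ × ℕ) => B ∈ P ∧ C ∈ P ∧ DirectlyAbove B C) s s

/-- A non-temporal labelling of `N`. -/
def IsNonTemporal (N : Network) (t : ℕ → ℝ) : Prop :=
  (∀ u v : ℕ, N.arc u v = true → t u ≤ t v) ∧
  (∀ u v : ℕ, N.arc u v = true → t u = t v → IsRet N v) ∧
  (∀ u : ℕ, IsInternal N u → ∃ v : ℕ, N.arc u v = true ∧ t u < t v) ∧
  (∀ r u v : ℕ, IsRet N r → N.arc u r = true → N.arc v r = true → u ≠ v →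
    ¬ (t u = t r ∧ t v = t r))

/-- An inret: a reticulation with no incoming horizontal arc
(i.e. both incoming arcs vertical). -/
def Inret (N : Network) (t : ℕ → ℝ) (r : ℕ) : Prop :=
  IsRet N r ∧ ∀ u : ℕ, N.arc u r = true → t u ≠ t r

noncomputable def inretCount (N : Network) (t : ℕ → ℝ) : ℕ := {r : ℕ | Inret N t r}.ncard

/-- HGT-consistent labelling: a non-temporal labelling in which every reticulation
has exactly one incoming horizontal arc. -/
def IsHGTConsistent (N : Network) (t : ℕ → ℝ) : Prop :=
  IsNonTemporal N t ∧ ∀ r : ℕ, IsRet N r → ∃! u : ℕ, N.arc u r = true ∧ t u = t r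

/-- V_OR: the minimum number of inrets over all non-temporal labellings. -/
noncomputable def VOR (N : Network) : ℕ :=
  sInf {k : ℕ | ∃ t : ℕ → ℝ, IsNonTemporal N t ∧ inretCount N t = k}

/-- The network `N` is the result of the vertex-cover reduction applied to `G`. -/
def IsVCReduction {α : Type} [Fintype α] [DecidableEq α] (G : SimpleGraph α)
    (N : Network) : Prop :=
  ∃ (R W L M : α → ℕ → ℕ) (P : α → ℕ) (S : ℕ → ℕ) (rho : ℕ)
    (e : ℕ → α) (pi tau : α → α → ℕ),
    (∀ v : α, ∃! i : ℕ, 1 ≤ i ∧ i ≤ Fintype.card α ∧ e i = v) ∧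
    (∀ v u : α, G.Adj v u → pi v u ∈ ({1, 2, 3} : Set ℕ)) ∧
    (∀ v u u' : α, G.Adj v u → G.Adj v u' → pi v u = pi v u' → u = u') ∧
    (∀ v u : α, G.Adj v u → tau v u ∈ ({5, 6, 7} : Set ℕ)) ∧
    (∀ v u u' : α, G.Adj v u → G.Adj v u' → tau v u = tau v u' → u = u') ∧
    Function.Injective
      (fun z : (α × Fin 8) ⊕ (α × Fin 7) ⊕ (α × Fin 5) ⊕ (α × Fin 4) ⊕ α ⊕
          (Fin (Fintype.card α - 1)) ⊕ Unit =>
        match z with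
        | Sum.inl (v, i) => R v i.1
        | Sum.inr (Sum.inl (v, i)) => W v (i.1 + 1)
        | Sum.inr (Sum.inr (Sum.inl (v, i))) => L v (i.1 + 1)
        | Sum.inr (Sum.inr (Sum.inr (Sum.inl (v, i)))) => M v (i.1 + 1)
        | Sum.inr (Sum.inr (Sum.inr (Sum.inr (Sum.inl v)))) => P v
        | Sum.inr (Sum.inr (Sum.inr (Sum.inr (Sum.inr (Sum.inl i))))) => S (i.1 + 1)
        | Sum.inr (Sum.inr (Sum.inr (Sum.inr (Sum.inr (Sum.inr _))))) => rho) ∧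
    N.root = rho ∧
    (∀ x : ℕ, x ∈ N.verts ↔
      (∃ v i, i ≤ 7 ∧ x = R v i) ∨ (∃ v i, 1 ≤ i ∧ i ≤ 7 ∧ x = W v i) ∨
      (∃ v i, 1 ≤ i ∧ i ≤ 5 ∧ x = L v i) ∨ (∃ v i, 1 ≤ i ∧ i ≤ 4 ∧ x = M v i) ∨
      (∃ v, x = P v) ∨ (∃ i, 1 ≤ i ∧ i ≤ Fintype.card α - 1 ∧ x = S i) ∨ x = rho) ∧
    (∀ a b : ℕ, N.arc a b = true ↔
      (a = rho ∧ b = S 1) ∨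
      (∃ i, 1 ≤ i ∧ i ≤ Fintype.card α - 2 ∧ a = S i ∧ b = S (i + 1)) ∨
      (∃ i, 1 ≤ i ∧ i ≤ Fintype.card α - 1 ∧ a = S i ∧ b = P (e i)) ∨
      (a = S (Fintype.card α - 1) ∧ b = P (e (Fintype.card α))) ∨
      (∃ v, a = P v ∧ (b = M v 4 ∨ b = W v 7)) ∨
      (∃ v, a = M v 4 ∧ (b = M v 3 ∨ b = R v 0)) ∨
      (∃ v, a = M v 3 ∧ (b = M v 2 ∨ b = W v 6)) ∨
      (∃ v, a = M v 2 ∧ (b = M v 1 ∨ b = W v 5)) ∨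
      (∃ v, a = M v 1 ∧ (b = R v 0 ∨ b = W v 4)) ∨
      (∃ v, a = R v 0 ∧ b = R v 1) ∨
      (∃ v i, 1 ≤ i ∧ i ≤ 6 ∧ a = W v i ∧ (b = R v i ∨ b = R v (i + 1))) ∨
      (∃ v, a = W v 7 ∧ (b = R v 7 ∨ b = L v 5)) ∨
      (∃ v i, 1 ≤ i ∧ i ≤ 4 ∧ a = R v i ∧ b = L v i) ∨
      (∃ u v, G.Adj u v ∧ a = R u (tau u v) ∧ b = W v (pi v u)))

/-
The unique out-arc `r c` of a reticulation `r` lies in a single shape of the cover. A cherry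
shape, or a reticulated cherry shape using `r c` as its middle or side arc, would give `r` two
children; so `r c` is the top arc of a reticulated cherry shape, whose middle arc enters `r`.
Any other middle arc `u r` comes with a shape containing `r c`, hence with the same shape, and
in that shape the only arc entering `r` is the middle one.
-/

theorem IsRet.ne_root {N : Network} {r : ℕ} (hr : IsRet N r) : r ≠ N.root := by
  rintro rfl
  have h₀ : inDeg N N.root = 0 := N.root_indeg
  exact two_ne_zero (hr.2.symm.trans h₀)

theorem IsRet.outDeg_eq_one {N : Network} {r : ℕ} (hr : IsRet N r) : outDeg N r = 1 := by
  have h₂ : inDeg N r = 2 := hr.2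
  unfold inDeg at h₂
  unfold outDeg
  rcases N.nonroot_deg r hr.1 hr.ne_root with ⟨h, -⟩ | ⟨-, h⟩ | ⟨h, -⟩ <;> omega

theorem existsUnique_arc_of_outDeg_eq_one {N : Network} {v : ℕ} (h : outDeg N v = 1) :
    ∃! c, N.arc v c = true := by
  obtain ⟨c, hc⟩ := Finset.card_eq_one.mp h
  have arc_iff : ∀ w, N.arc v w = true ↔ w = c := fun w => by
    have hw := Finset.ext_iff.mp hc w
    rw [Finset.mem_filter, Finset.mem_singleton] at hw
    exact ⟨fun h => hw.1 ⟨(N.arc_mem v w h).2, h⟩, fun h => (hw.2 h).2⟩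
  exact ⟨c, (arc_iff c).2 rfl, fun w hw => (arc_iff w).1 hw⟩

theorem exists_isMiddleArcOf_of_mem_of_unique_child {N : Network} {s : Set (ℕ × ℕ)} {v c : ℕ}
    (hs : IsCherryShape N s ∨ IsRetCherryShape N s) (hvc : (v, c) ∈ s)
    (hv : ∀ w, N.arc v w = true → w = c) :
    ∃ u, N.arc u v = true ∧ IsMiddleArcOf N s u v := by
  rcases hs with ⟨p, x, y, hxy, hpx, hpy, rfl⟩ | ⟨x, y, px, py, hpx, hx, hpy, hy, hypx, rfl⟩ <;>
    simp only [Set.mem_insert_iff, Set.mem_singleton_iff, Prod.mk.injEq] at hvc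
  · exfalso
    obtain ⟨rfl, -⟩ | ⟨rfl, -⟩ := hvc <;> exact hxy ((hv x hpx).trans (hv y hpy).symm)
  · obtain ⟨rfl, rfl⟩ | ⟨rfl, -⟩ | ⟨rfl, -⟩ := hvc
    · exact ⟨py, hpy, _, y, hpx, hx, hpy, hy, hypx, rfl⟩
    all_goals exact absurd ((hv y hy).trans (hv px hpy).symm) hypx

theorem IsMiddleArcOf.exists_mem_arc {N : Network} {s : Set (ℕ × ℕ)} {u r : ℕ}
    (h : IsMiddleArcOf N s u r) : ∃ x, N.arc r x = true ∧ (r, x) ∈ s := by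
  obtain ⟨x, -, -, hrx, -, -, -, rfl⟩ := h
  exact ⟨x, hrx, Or.inl rfl⟩

theorem IsMiddleArcOf.tail_unique {N : Network} {s : Set (ℕ × ℕ)} {u u' r : ℕ}
    (h : IsMiddleArcOf N s u r) (h' : IsMiddleArcOf N s u' r) : u' = u := by
  obtain ⟨x, y, -, -, -, -, -, rfl⟩ := h
  obtain ⟨x', y', -, -, hu'r, -, -, hs⟩ := h'
  have hmem : (u', r) ∈ ({(r, x), (u, r), (u, y)} : Set (ℕ × ℕ)) := by
    rw [hs]
    exact Or.inr (Or.inl rfl)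
  simp only [Set.mem_insert_iff, Set.mem_singleton_iff, Prod.mk.injEq] at hmem
  obtain ⟨rfl, -⟩ | ⟨rfl, -⟩ | ⟨rfl, -⟩ := hmem
  · exact (N.acyclic u' (.single hu'r)).elim
  all_goals rfl

theorem IsCherryCover.eq_of_mem {N : Network} {P : Set (Set (ℕ × ℕ))} (hP : IsCherryCover N P)
    {a b : ℕ} (hab : N.arc a b = true) (ha : a ≠ N.root) {s s' : Set (ℕ × ℕ)}
    (hs : s ∈ P) (hs' : s' ∈ P) (habs : (a, b) ∈ s) (habs' : (a, b) ∈ s') : s' = s :=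
  (hP.2 a b hab ha).unique ⟨hs', habs'⟩ ⟨hs, habs⟩

theorem unique_middle_arc_general (N : Network)
    (P : Set (Set (ℕ × ℕ))) (hP : IsCherryCover N P) (r : ℕ) (hr : IsRet N r) :
    ∃! u : ℕ, N.arc u r = true ∧ ∃ s ∈ P, IsMiddleArcOf N s u r := by
  obtain ⟨c, hrc, hc⟩ := existsUnique_arc_of_outDeg_eq_one hr.outDeg_eq_one
  obtain ⟨s, hsP, hrcs⟩ := (hP.2 r c hrc hr.ne_root).exists
  obtain ⟨u, hur, hmid⟩ := exists_isMiddleArcOf_of_mem_of_unique_child (hP.1 s hsP) hrcs hc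
  refine ⟨u, ⟨hur, s, hsP, hmid⟩, ?_⟩
  rintro u' ⟨-, s', hs'P, hmid'⟩
  obtain ⟨x', hrx', hrx's'⟩ := hmid'.exists_mem_arc
  rw [hc x' hrx'] at hrx's'
  rw [hP.eq_of_mem hrc hr.ne_root hsP hs'P hrcs hrx's'] at hmid'
  exact hmid.tail_unique hmid'

/-- In a tree-based network, any cherry cover assigns exactly one
of the two incoming arcs of each reticulation to be the middle arc of a
reticulated cherry shape. -/
theorem unique_middle_arc (N : Network) (hTB : IsTreeBased N)
    (P : Set (Set (ℕ × ℕ))) (hP : IsCherryCover N P) (r : ℕ) (hr : IsRet N r) :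
    ∃! u : ℕ, N.arc u r = true ∧ ∃ s ∈ P, IsMiddleArcOf N s u r :=
  unique_middle_arc_general N P hP r hr

end PhyloNet
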